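/- Output (pathwise inequality): Let H(A), H(A*) : [0,∞) → [0,∞) be nondecreasing with H(A*(t)) ≤ H(A(t)) for all t (output information never exceeds input information). For x ≥ 0, β, α nonnegative nondecreasing, write H(A(u,s)) = H(A(s)) − H(A(u)). Then for all t ≥ 0: sup_{0≤s≤t} sup_{0≤u≤s} [ H(A*(u,s)) − (α ⊘ β)(s−u) ] ≤ sup_{0≤s≤t} sup_{0≤u≤s} [ H(A(u,s)) − α(s−u) ] + sup_{0≤s≤t} [ (H(A) ⊗ [β]ˣ)(s) − H(A*(s)) ], where (α ⊘ β)(τ) = sup_{v≥0} (α(τ+v) − β(v)) and H(A*(u,s)) = H(A*(s)) − H(A*(u)). -/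

import Mathlib

/-!
Fix `0 ≤ u ≤ s ≤ t` and let `B` be the supremum of the input increments `H(A(w,s)) - α(s - w)`.
For every `w ∈ [0, u]`, since output never exceeds input,
`H(A*(s)) ≤ H(A(s)) ≤ B + H(A(w)) + α(s - w)`, and
`α(s - w) ≤ (α ⊘ β)(s - u) + β(u - w) ≤ (α ⊘ β)(s - u) + [β]ˣ(u - w)`.
Taking the infimum over `w` gives `H(A*(s)) - (α ⊘ β)(s - u) - B ≤ (H(A) ⊗ [β]ˣ)(u)`, so subtracting
`H(A*(u))` bounds the output increment by `B` plus the backlog term at time `u`.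
-/

open Set

/-- The `(min,+)` convolution `(f ⊗ g)(s) = inf_{0 ≤ u ≤ s} (f u + g (s - u))`. -/
noncomputable def minConv (f g : ℝ → ℝ) (s : ℝ) : ℝ :=
  sInf ((fun u => f u + g (s - u)) '' Set.Icc 0 s)

/-- The `(min,+)` deconvolution `(f ⊘ g)(τ) = sup_{v ≥ 0} (f (τ+v) - g v)`. -/
noncomputable def deconv (f g : ℝ → ℝ) (τ : ℝ) : ℝ :=
  sSup ((fun v => f (τ + v) - g v) '' Set.Ici 0)

/-- The clipped curve `[β]ˣ(t) = max (β t) x`. -/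
def clip (β : ℝ → ℝ) (x : ℝ) : ℝ → ℝ := fun t => max (β t) x

section MinPlus

variable {f g h : ℝ → ℝ} {c s t : ℝ}

theorem le_minConv (hs : 0 ≤ s) (hc : ∀ u ∈ Icc 0 s, c ≤ f u + g (s - u)) :
    c ≤ minConv f g s :=
  le_csInf ⟨_, mem_image_of_mem _ ⟨le_rfl, hs⟩⟩ (forall_mem_image.2 hc)

theorem minConv_le {u : ℝ} (hf : Monotone f) (hg : ∀ v, c ≤ g v) (hu : u ∈ Icc 0 s) :
    minConv f g s ≤ f u + g (s - u) :=
  csInf_le ⟨f 0 + c, forall_mem_image.2 fun _ hw => add_le_add (hf hw.1) (hg _)⟩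
    (mem_image_of_mem _ hu)

theorem sub_le_deconv {τ v : ℝ} (hbdd : BddAbove ((fun v => f (τ + v) - g v) '' Ici 0))
    (hv : 0 ≤ v) : f (τ + v) - g v ≤ deconv f g τ :=
  le_csSup hbdd (mem_image_of_mem _ hv)

theorem bddAbove_increment_sub (hf : Monotone f) (hg : ∀ v, 0 ≤ g v) :
    BddAbove {y : ℝ | ∃ s ∈ Icc 0 t, ∃ u ∈ Icc (0:ℝ) s, y = (f s - f u) - g (s - u)} := by
  refine ⟨f t - f 0, ?_⟩
  rintro _ ⟨s, hs, u, hu, rfl⟩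
  linarith [hf hs.2, hf hu.1, hg (s - u)]

theorem bddAbove_minConv_sub (hf : Monotone f) (hg : ∀ v, c ≤ g v) (hh : Monotone h) :
    BddAbove ((fun s => minConv f g s - h s) '' Icc 0 t) := by
  refine ⟨f t + g 0 - h 0, forall_mem_image.2 fun s hs => ?_⟩
  have hconv := minConv_le hf hg ⟨hs.1, le_rfl⟩
  rw [sub_self] at hconv
  linarith [hf hs.2, hh hs.1]

end MinPlus

theorem output_increment_le_add_minConv_clip {HA HAs α β : ℝ → ℝ} {x s u B : ℝ}
    (hout : HAs s ≤ HA s) (hu : u ∈ Icc 0 s)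
    (hdeconv : BddAbove ((fun v => α (s - u + v) - β v) '' Ici 0))
    (hB : ∀ w ∈ Icc 0 s, HA s - HA w - α (s - w) ≤ B) :
    HAs s - HAs u - deconv α β (s - u) ≤ B + (minConv HA (clip β x) u - HAs u) := by
  suffices HAs s - deconv α β (s - u) - B ≤ minConv HA (clip β x) u by linarith
  refine le_minConv hu.1 fun w hw => ?_
  have hα := sub_le_deconv hdeconv (sub_nonneg.2 hw.2)
  rw [sub_add_sub_cancel] at hα
  have hβ : β (u - w) ≤ clip β x (u - w) := le_max_left _ _
  linarith [hB w ⟨hw.1, hw.2.trans hu.2⟩]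

theorem stmt10_general (HA HAs : ℝ → ℝ) (α β : ℝ → ℝ) (x t : ℝ) (ht : 0 ≤ t)
    (hHA : Monotone HA) (hHAs : Monotone HAs)
    (hout : ∀ s, HAs s ≤ HA s)
    (hαn : ∀ s, 0 ≤ α s)
    (hdeconv : ∀ τ : ℝ, BddAbove ((fun v => α (τ + v) - β v) '' Set.Ici 0)) :
    sSup {y : ℝ | ∃ s ∈ Set.Icc 0 t, ∃ u ∈ Set.Icc (0:ℝ) s,
        y = (HAs s - HAs u) - deconv α β (s - u)} ≤
      sSup {y : ℝ | ∃ s ∈ Set.Icc 0 t, ∃ u ∈ Set.Icc (0:ℝ) s,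
        y = (HA s - HA u) - α (s - u)} +
      sSup ((fun s => minConv HA (clip β x) s - HAs s) '' Set.Icc 0 t) := by
  have hBbdd := bddAbove_increment_sub (t := t) hHA hαn
  have hCbdd := bddAbove_minConv_sub (t := t) hHA (fun v => le_max_right (β v) x) hHAs
  refine csSup_le ⟨_, 0, ⟨le_rfl, ht⟩, 0, ⟨le_rfl, le_rfl⟩, rfl⟩ ?_
  rintro _ ⟨s, hs, u, hu, rfl⟩
  calc HAs s - HAs u - deconv α β (s - u)
      ≤ sSup {y : ℝ | ∃ s ∈ Set.Icc 0 t, ∃ u ∈ Set.Icc (0:ℝ) s, y = (HA s - HA u) - α (s - u)} +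
          (minConv HA (clip β x) u - HAs u) :=
        output_increment_le_add_minConv_clip (hout s) hu (hdeconv _)
          fun w hw => le_csSup hBbdd ⟨s, hs, w, hw, rfl⟩
    _ ≤ _ := add_le_add_right (le_csSup hCbdd ⟨u, ⟨hu.1, hu.2.trans hs.2⟩, rfl⟩) _

/-- Output theorem, pathwise inequality. -/
theorem stmt10 (HA HAs : ℝ → ℝ) (α β : ℝ → ℝ) (x t : ℝ) (hx : 0 ≤ x) (ht : 0 ≤ t)
    (hHA : Monotone HA) (hHAs : Monotone HAs)
    (hHAn : ∀ s, 0 ≤ HA s) (hHAsn : ∀ s, 0 ≤ HAs s)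
    (hout : ∀ s, HAs s ≤ HA s)
    (hα : Monotone α) (hβ : Monotone β) (hαn : ∀ s, 0 ≤ α s) (hβn : ∀ s, 0 ≤ β s)
    (hdeconv : ∀ τ : ℝ, BddAbove ((fun v => α (τ + v) - β v) '' Set.Ici 0)) :
    sSup {y : ℝ | ∃ s ∈ Set.Icc 0 t, ∃ u ∈ Set.Icc (0:ℝ) s,
        y = (HAs s - HAs u) - deconv α β (s - u)} ≤
      sSup {y : ℝ | ∃ s ∈ Set.Icc 0 t, ∃ u ∈ Set.Icc (0:ℝ) s,
        y = (HA s - HA u) - α (s - u)} +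
      sSup ((fun s => minConv HA (clip β x) s - HAs s) '' Set.Icc 0 t) :=
  stmt10_general HA HAs α β x t ht hHA hHAs hout hαn hdeconv
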